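/- Let n ≥ 5, let 4 ≤ s ≤ n, and let αₛ,…,αₙ ∈ ℂ with αₛ ≠ 0. Then the transposed 0-Poisson algebra TP₀(0,…,0,αₛ,…,αₙ) (with α₁ = … = α_{s−1} = 0) is isomorphic to TP₀(0,…,0,1ₛ,0,…,0), i.e., to the structure on μ₀ⁿ with [e₁,e₂] = eₛ and all other basis brackets zero. -/

import Mathlib

open Finset

/-- The null-filiform associative multiplication on `ℂⁿ = Fin n → ℂ`.
The basis vector `e_i` (1-based) corresponds to the coordinate `i - 1`, and
`e_i · e_j = e_{i+j}` if `i + j ≤ n`, and `0` otherwise. -/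
noncomputable def nfMul (n : ℕ) (x y : Fin n → ℂ) : Fin n → ℂ :=
  fun k => ∑ i : Fin n, ∑ j : Fin n,
    if (i : ℕ) + (j : ℕ) + 1 = (k : ℕ) then x i * y j else 0

/-- The 1-based basis vector `e i` of `ℂⁿ` (zero if `i` is out of range `1,…,n`). -/
noncomputable def nfE (n : ℕ) (i : ℕ) : Fin n → ℂ :=
  fun k => if (k : ℕ) + 1 = i then 1 else 0

/-- The coefficient of the basis vector `e i` (1-based) in `x`. -/
noncomputable def nfCoeff (n : ℕ) (x : Fin n → ℂ) (i : ℕ) : ℂ :=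
  ∑ k : Fin n, if (k : ℕ) + 1 = i then x k else 0

/-- A Lie bracket (bilinear, alternating, satisfying the Jacobi identity)
on a complex vector space. -/
structure LieBracketOn (L : Type*) [AddCommGroup L] [Module ℂ L] where
  br : L → L → L
  add_left : ∀ x y z, br (x + y) z = br x z + br y z
  smul_left : ∀ (c : ℂ) (x y : L), br (c • x) y = c • br x y
  add_right : ∀ x y z, br x (y + z) = br x y + br x z
  smul_right : ∀ (c : ℂ) (x y : L), br x (c • y) = c • br x y
  alt : ∀ x, br x x = 0
  jacobi : ∀ x y z, br (br x y) z + br (br y z) x + br (br z x) y = 0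

/-- `(μ₀ⁿ, ·, [-,-])` is a transposed `δ`-Poisson algebra:
`δ • (z · [x,y]) = [z·x, y] + [x, z·y]`. -/
noncomputable def IsTransposedPoisson (n : ℕ) (δ : ℂ) (B : LieBracketOn (Fin n → ℂ)) : Prop :=
  ∀ x y z, δ • nfMul n z (B.br x y) = B.br (nfMul n z x) y + B.br x (nfMul n z y)

/-- `(μ₀ⁿ, ·, [-,-])` is a `δ`-Poisson algebra:
`[x, y·z] = δ • ([x,y]·z + y·[x,z])`. -/
noncomputable def IsDeltaPoisson (n : ℕ) (δ : ℂ) (B : LieBracketOn (Fin n → ℂ)) : Prop :=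
  ∀ x y z, B.br x (nfMul n y z) = δ • (nfMul n (B.br x y) z + nfMul n y (B.br x z))

/-- The bracket of the transposed 0-Poisson algebra `TP₀(α₁,…,αₙ)` on `μ₀ⁿ`:
determined by `[e₁,e₂] = ∑_{t=1}^n αₜ eₜ` and `[eᵢ,eⱼ] = 0` for all other
pairs `i < j`. -/
noncomputable def brTP0 (n : ℕ) (α : ℕ → ℂ) (x y : Fin n → ℂ) : Fin n → ℂ :=
  (nfCoeff n x 1 * nfCoeff n y 2 - nfCoeff n x 2 * nfCoeff n y 1) •
    ∑ t ∈ Finset.Icc 1 n, α t • nfE n t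

/-- The bracket of the transposed 1-Poisson algebra `TP₁(α₂,…,αₙ)` on `μ₀ⁿ`:
determined by `[e₁,eᵢ] = ∑_{t=i}^n α_{t-i+2} eₜ` for `2 ≤ i ≤ n` and
`[eᵢ,eⱼ] = 0` for `2 ≤ i < j ≤ n`. -/
noncomputable def brTP1 (n : ℕ) (α : ℕ → ℂ) (x y : Fin n → ℂ) : Fin n → ℂ :=
  ∑ i ∈ Finset.Icc 2 n,
    (nfCoeff n x 1 * nfCoeff n y i - nfCoeff n x i * nfCoeff n y 1) •
      ∑ t ∈ Finset.Icc i n, α (t + 2 - i) • nfE n t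

/-- The bracket of the transposed `δ`-Poisson algebra `TP_δ(a, b, c)`
(`a = α_{n-2}`, `b = α_{n-1}`, `c = αₙ`) on `μ₀ⁿ`: determined by
`[e₁,e₂] = a e_{n-2} + b e_{n-1} + c eₙ`, `[e₁,e₃] = δ(a e_{n-1} + b eₙ)`,
`[e₂,e₃] = ((δ²-δ)/2) a eₙ`, `[e₁,e₄] = ((δ²+δ)/2) a eₙ`, and `[eᵢ,eⱼ] = 0`
for all other pairs `i < j`. -/
noncomputable def brTPd (n : ℕ) (δ a b c : ℂ) (x y : Fin n → ℂ) : Fin n → ℂ :=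
  (nfCoeff n x 1 * nfCoeff n y 2 - nfCoeff n x 2 * nfCoeff n y 1) •
      (a • nfE n (n-2) + b • nfE n (n-1) + c • nfE n n)
  + (nfCoeff n x 1 * nfCoeff n y 3 - nfCoeff n x 3 * nfCoeff n y 1) •
      (δ • (a • nfE n (n-1) + b • nfE n n))
  + (nfCoeff n x 2 * nfCoeff n y 3 - nfCoeff n x 3 * nfCoeff n y 2) •
      (((δ^2 - δ)/2 * a) • nfE n n)
  + (nfCoeff n x 1 * nfCoeff n y 4 - nfCoeff n x 4 * nfCoeff n y 1) •
      (((δ^2 + δ)/2 * a) • nfE n n)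

/-- Two bracket structures on `μ₀ⁿ` are isomorphic (as transposed δ-Poisson
algebras): there is a linear bijection preserving both `·` and `[-,-]`. -/
noncomputable def TPIso (n : ℕ) (B B' : (Fin n → ℂ) → (Fin n → ℂ) → (Fin n → ℂ)) : Prop :=
  ∃ φ : (Fin n → ℂ) ≃ₗ[ℂ] (Fin n → ℂ),
    (∀ x y, φ (nfMul n x y) = nfMul n (φ x) (φ y)) ∧
    ∀ x y, φ (B x y) = B' (φ x) (φ y)

namespace S10

variable {n : ℕ}

lemma fin_sum_ite (m : ℕ) (g : Fin n → ℂ) :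
    (∑ a : Fin n, if (a : ℕ) = m then g a else 0) =
      if h : m < n then g ⟨m, h⟩ else 0 := by
  split_ifs with h
  · rw [Finset.sum_eq_single (⟨m, h⟩ : Fin n)]
    · simp
    · intro b _ hb
      rw [if_neg]
      intro hc; exact hb (Fin.ext hc)
    · simp
  · apply Finset.sum_eq_zero
    intro a _
    rw [if_neg]
    have := a.isLt; omega

lemma nfMul_supp (x y : Fin n → ℂ) (p q : ℕ)
    (hx : ∀ i : Fin n, (i : ℕ) < p → x i = 0)
    (hy : ∀ j : Fin n, (j : ℕ) < q → y j = 0) :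
    ∀ k : Fin n, (k : ℕ) < p + q + 1 → nfMul n x y k = 0 := by
  intro k hk
  apply Finset.sum_eq_zero; intro i _
  apply Finset.sum_eq_zero; intro j _
  split_ifs with h
  · rcases lt_or_ge (i : ℕ) p with hi | hi
    · rw [hx i hi, zero_mul]
    · rw [hy j (by omega), mul_zero]
  · rfl

lemma nfMul_coeff (x y : Fin n → ℂ) (p q : ℕ) (hp : p < n) (hq : q < n)
    (hx : ∀ i : Fin n, (i : ℕ) < p → x i = 0)
    (hy : ∀ j : Fin n, (j : ℕ) < q → y j = 0)
    (k : Fin n) (hk : (k : ℕ) = p + q + 1) :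
    nfMul n x y k = x ⟨p, hp⟩ * y ⟨q, hq⟩ := by
  show (∑ i : Fin n, ∑ j : Fin n, if (i:ℕ)+(j:ℕ)+1 = (k:ℕ) then x i * y j else 0) = _
  rw [Finset.sum_eq_single (⟨p, hp⟩ : Fin n)]
  · rw [Finset.sum_eq_single (⟨q, hq⟩ : Fin n)]
    · rw [if_pos (by simp; omega)]
    · intro j _ hj
      have hjq : (j : ℕ) ≠ q := by
        intro hc; exact hj (by apply Fin.ext; simp [hc])
      rw [if_neg]; simp only [Fin.val_mk]; omega
    · simp
  · intro i _ hi
    apply Finset.sum_eq_zero; intro j _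
    split_ifs with h
    · have hip : (i : ℕ) ≠ p := fun hc => hi (Fin.ext hc)
      rcases lt_or_ge (i : ℕ) p with h1 | h1
      · rw [hx i h1, zero_mul]
      · rw [hy j (by omega), mul_zero]
    · rfl
  · simp

lemma fin_sum_ite' (m : ℕ) (Q : ℕ → Prop) [DecidablePred Q] (c : ℂ) :
    (∑ a : Fin n, if (m = (a : ℕ) ∧ Q (a : ℕ)) then c else 0)
      = if (m < n ∧ Q m) then c else 0 := by
  rcases lt_or_ge m n with h | h
  · rw [Finset.sum_eq_single (⟨m, h⟩ : Fin n)]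
    · by_cases hq : Q m
      · rw [if_pos ⟨rfl, hq⟩, if_pos ⟨h, hq⟩]
      · rw [if_neg (fun hc => hq hc.2), if_neg (fun hc => hq hc.2)]
    · intro a _ ha
      rw [if_neg]
      rintro ⟨hc, -⟩
      exact ha (by apply Fin.ext; simp [← hc])
    · simp
  · rw [if_neg (by omega)]
    apply Finset.sum_eq_zero
    intro a _
    rw [if_neg]
    rintro ⟨hc, -⟩
    have := a.isLt; omega

lemma tripleR (x y z : Fin n → ℂ) (k : Fin n) :
    nfMul n x (nfMul n y z) k
      = ∑ i : Fin n, ∑ j : Fin n, ∑ b : Fin n,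
          if (i:ℕ)+(j:ℕ)+(b:ℕ)+2 = (k:ℕ) then x i * y j * z b else 0 := by
  show (∑ i : Fin n, ∑ a : Fin n,
      if (i:ℕ)+(a:ℕ)+1 = (k:ℕ) then x i * (nfMul n y z) a else 0) = _
  have h1 : ∀ i a : Fin n,
      (if (i:ℕ)+(a:ℕ)+1 = (k:ℕ) then x i * (nfMul n y z) a else 0)
        = ∑ j : Fin n, ∑ b : Fin n,
            if ((j:ℕ)+(b:ℕ)+1 = (a:ℕ) ∧ (i:ℕ)+(a:ℕ)+1 = (k:ℕ))
              then x i * y j * z b else 0 := by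
    intro i a
    split_ifs with h
    · show x i * (∑ j : Fin n, ∑ b : Fin n,
          if (j:ℕ)+(b:ℕ)+1 = (a:ℕ) then y j * z b else 0) = _
      rw [Finset.mul_sum]
      refine Finset.sum_congr rfl fun j _ => ?_
      rw [Finset.mul_sum]
      refine Finset.sum_congr rfl fun b _ => ?_
      simp [h, mul_ite, mul_assoc]
    · symm; apply Finset.sum_eq_zero; intro j _
      apply Finset.sum_eq_zero; intro b _
      rw [if_neg fun hc => h hc.2]
  simp only [h1]
  refine Finset.sum_congr rfl fun i _ => ?_
  -- order (a, j, b) → (j, a, b) → (j, b, a)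
  rw [Finset.sum_comm]
  refine Finset.sum_congr rfl fun j _ => ?_
  rw [Finset.sum_comm]
  refine Finset.sum_congr rfl fun b _ => ?_
  rw [fin_sum_ite' ((j:ℕ)+(b:ℕ)+1) (fun t => (i:ℕ) + t + 1 = (k:ℕ)) (x i * y j * z b)]
  have := k.isLt
  split_ifs with h1' h2' <;> first | rfl | omega

lemma tripleL (x y z : Fin n → ℂ) (k : Fin n) :
    nfMul n (nfMul n x y) z k
      = ∑ i : Fin n, ∑ j : Fin n, ∑ b : Fin n,
          if (i:ℕ)+(j:ℕ)+(b:ℕ)+2 = (k:ℕ) then x i * y j * z b else 0 := by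
  show (∑ a : Fin n, ∑ b : Fin n,
      if (a:ℕ)+(b:ℕ)+1 = (k:ℕ) then (nfMul n x y) a * z b else 0) = _
  have h1 : ∀ a b : Fin n,
      (if (a:ℕ)+(b:ℕ)+1 = (k:ℕ) then (nfMul n x y) a * z b else 0)
        = ∑ i : Fin n, ∑ j : Fin n,
            if ((i:ℕ)+(j:ℕ)+1 = (a:ℕ) ∧ (a:ℕ)+(b:ℕ)+1 = (k:ℕ))
              then x i * y j * z b else 0 := by
    intro a b
    split_ifs with h
    · show (∑ i : Fin n, ∑ j : Fin n,
          if (i:ℕ)+(j:ℕ)+1 = (a:ℕ) then x i * y j else 0) * z b = _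
      rw [Finset.sum_mul]
      refine Finset.sum_congr rfl fun i _ => ?_
      rw [Finset.sum_mul]
      refine Finset.sum_congr rfl fun j _ => ?_
      simp [h, ite_mul]
    · symm; apply Finset.sum_eq_zero; intro i _
      apply Finset.sum_eq_zero; intro j _
      rw [if_neg fun hc => h hc.2]
  simp only [h1]
  rw [Finset.sum_comm]   -- (b, a, i, j)
  have h2 : ∀ b : Fin n,
      (∑ a : Fin n, ∑ i : Fin n, ∑ j : Fin n,
        if ((i:ℕ)+(j:ℕ)+1 = (a:ℕ) ∧ (a:ℕ)+(b:ℕ)+1 = (k:ℕ))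
          then x i * y j * z b else 0)
      = ∑ i : Fin n, ∑ j : Fin n,
          if ((i:ℕ)+(j:ℕ)+(b:ℕ)+2 = (k:ℕ)) then x i * y j * z b else 0 := by
    intro b
    rw [Finset.sum_comm]   -- (i, a, j)
    refine Finset.sum_congr rfl fun i _ => ?_
    rw [Finset.sum_comm]   -- (j, a)
    refine Finset.sum_congr rfl fun j _ => ?_
    rw [fin_sum_ite' ((i:ℕ)+(j:ℕ)+1) (fun t => t + (b:ℕ) + 1 = (k:ℕ)) (x i * y j * z b)]
    have := k.isLt
    split_ifs with h1' h2' <;> first | rfl | omega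
  simp only [h2]
  -- now (b, i, j) → (i, j, b)
  rw [Finset.sum_comm]
  refine Finset.sum_congr rfl fun i _ => ?_
  rw [Finset.sum_comm]

lemma nfMul_assoc (x y z : Fin n → ℂ) :
    nfMul n (nfMul n x y) z = nfMul n x (nfMul n y z) := by
  funext k; rw [tripleL, tripleR]

lemma nfMul_add_left (x x' y : Fin n → ℂ) :
    nfMul n (x + x') y = nfMul n x y + nfMul n x' y := by
  funext k
  simp only [nfMul, Pi.add_apply, ← Finset.sum_add_distrib]
  refine Finset.sum_congr rfl fun i _ => ?_
  refine Finset.sum_congr rfl fun j _ => ?_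
  split <;> ring

lemma nfMul_smul_left (c : ℂ) (x y : Fin n → ℂ) :
    nfMul n (c • x) y = c • nfMul n x y := by
  funext k
  simp only [nfMul, Pi.smul_apply, smul_eq_mul, Finset.mul_sum]
  refine Finset.sum_congr rfl fun i _ => ?_
  refine Finset.sum_congr rfl fun j _ => ?_
  split <;> ring

lemma nfMul_add_right (x y y' : Fin n → ℂ) :
    nfMul n x (y + y') = nfMul n x y + nfMul n x y' := by
  funext k
  simp only [nfMul, Pi.add_apply, ← Finset.sum_add_distrib]
  refine Finset.sum_congr rfl fun i _ => ?_
  refine Finset.sum_congr rfl fun j _ => ?_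
  split <;> ring

lemma nfMul_smul_right (c : ℂ) (x y : Fin n → ℂ) :
    nfMul n x (c • y) = c • nfMul n x y := by
  funext k
  simp only [nfMul, Pi.smul_apply, smul_eq_mul, Finset.mul_sum]
  refine Finset.sum_congr rfl fun i _ => ?_
  refine Finset.sum_congr rfl fun j _ => ?_
  split <;> ring

lemma nfMul_zero_left (y : Fin n → ℂ) : nfMul n 0 y = 0 := by
  funext k
  simp [nfMul]

lemma nfMul_zero_right (x : Fin n → ℂ) : nfMul n x 0 = 0 := by
  funext k
  simp [nfMul]

lemma nfMul_sum_left {ι : Type*} (t : Finset ι) (f : ι → Fin n → ℂ) (y : Fin n → ℂ) :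
    nfMul n (∑ i ∈ t, f i) y = ∑ i ∈ t, nfMul n (f i) y := by
  classical
  induction t using Finset.induction_on with
  | empty => simp [nfMul_zero_left]
  | insert _ _ h ih => rw [Finset.sum_insert h, nfMul_add_left, ih, Finset.sum_insert h]

lemma nfMul_sum_right {ι : Type*} (t : Finset ι) (x : Fin n → ℂ) (f : ι → Fin n → ℂ) :
    nfMul n x (∑ i ∈ t, f i) = ∑ i ∈ t, nfMul n x (f i) := by
  classical
  induction t using Finset.induction_on with
  | empty => simp [nfMul_zero_right]
  | insert _ _ h ih => rw [Finset.sum_insert h, nfMul_add_right, ih, Finset.sum_insert h]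

noncomputable def pw (u : Fin n → ℂ) : ℕ → (Fin n → ℂ)
  | 0 => u
  | m + 1 => nfMul n u (pw u m)

lemma pw_supp (u : Fin n → ℂ) : ∀ m, ∀ k : Fin n, (k : ℕ) < m → pw u m k = 0 := by
  intro m
  induction m with
  | zero => intro k hk; omega
  | succ m ih =>
    intro k hk
    exact nfMul_supp u (pw u m) 0 m (fun i hi => absurd hi (by omega)) ih k (by omega)

lemma pw_zero_of_ge (u : Fin n → ℂ) (m : ℕ) (hm : n ≤ m) : pw u m = 0 := by
  funext k
  exact pw_supp u m k (lt_of_lt_of_le k.isLt hm)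

lemma pw_coeff (u : Fin n → ℂ) (m : ℕ) (hm : m < n) :
    pw u m ⟨m, hm⟩ = (u ⟨0, by omega⟩) ^ (m + 1) := by
  induction m with
  | zero => exact (pow_one _).symm
  | succ m ih =>
    have hm' : m < n := by omega
    rw [show pw u (m+1) = nfMul n u (pw u m) from rfl]
    rw [nfMul_coeff u (pw u m) 0 m (by omega) hm'
        (fun i hi => absurd hi (by omega)) (pw_supp u m) ⟨m+1, hm⟩ (by simp)]
    rw [ih hm']
    ring

lemma pw_mul (u : Fin n → ℂ) (i j : ℕ) :
    nfMul n (pw u i) (pw u j) = pw u (i + j + 1) := by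
  induction i with
  | zero => rw [Nat.zero_add]; rfl
  | succ i ih =>
    rw [show pw u (i+1) = nfMul n u (pw u i) from rfl, nfMul_assoc, ih]
    show nfMul n u (pw u (i + j + 1)) = _
    rw [show i + 1 + j + 1 = (i + j + 1) + 1 by omega]
    rfl

noncomputable def Lmap (u : Fin n → ℂ) : (Fin n → ℂ) →ₗ[ℂ] (Fin n → ℂ) where
  toFun x := ∑ k : Fin n, x k • pw u (k : ℕ)
  map_add' x y := by
    simp only [Pi.add_apply, add_smul, Finset.sum_add_distrib]
  map_smul' c x := by
    simp only [Pi.smul_apply, smul_eq_mul, RingHom.id_apply, Finset.smul_sum, smul_smul]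

lemma Lmap_apply (u x : Fin n → ℂ) :
    Lmap u x = ∑ k : Fin n, x k • pw u (k : ℕ) := rfl

lemma fin_sum_ite_v {M : Type*} [AddCommMonoid M] (m : ℕ) (c : M) :
    (∑ a : Fin n, if m = (a : ℕ) then c else 0) = if m < n then c else 0 := by
  split_ifs with h
  · rw [Finset.sum_eq_single (⟨m, h⟩ : Fin n)]
    · simp
    · intro b _ hb
      rw [if_neg]
      intro hc; exact hb (by apply Fin.ext; simp [← hc])
    · simp
  · apply Finset.sum_eq_zero
    intro a _
    rw [if_neg]
    have := a.isLt; omega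

lemma Lmap_mul (u x y : Fin n → ℂ) :
    Lmap u (nfMul n x y) = nfMul n (Lmap u x) (Lmap u y) := by
  rw [Lmap_apply, Lmap_apply, Lmap_apply]
  have hR : nfMul n (∑ i : Fin n, x i • pw u (i : ℕ)) (∑ j : Fin n, y j • pw u (j : ℕ))
      = ∑ i : Fin n, ∑ j : Fin n, (x i * y j) • pw u ((i : ℕ) + (j : ℕ) + 1) := by
    rw [nfMul_sum_left]
    refine Finset.sum_congr rfl fun i _ => ?_
    rw [nfMul_smul_left, nfMul_sum_right, Finset.smul_sum]
    refine Finset.sum_congr rfl fun j _ => ?_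
    rw [nfMul_smul_right, pw_mul, smul_smul]
  rw [hR]
  have hL : ∀ k : Fin n, (nfMul n x y) k • pw u (k : ℕ)
      = ∑ i : Fin n, ∑ j : Fin n,
          if (i : ℕ) + (j : ℕ) + 1 = (k : ℕ)
            then (x i * y j) • pw u ((i : ℕ) + (j : ℕ) + 1) else 0 := by
    intro k
    show (∑ i : Fin n, ∑ j : Fin n,
        if (i : ℕ) + (j : ℕ) + 1 = (k : ℕ) then x i * y j else 0) • pw u (k : ℕ) = _
    rw [Finset.sum_smul]
    refine Finset.sum_congr rfl fun i _ => ?_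
    rw [Finset.sum_smul]
    refine Finset.sum_congr rfl fun j _ => ?_
    split_ifs with h
    · rw [h]
    · rw [zero_smul]
  simp only [hL]
  rw [Finset.sum_comm]
  refine Finset.sum_congr rfl fun i _ => ?_
  rw [Finset.sum_comm]
  refine Finset.sum_congr rfl fun j _ => ?_
  rw [fin_sum_ite_v ((i : ℕ) + (j : ℕ) + 1) ((x i * y j) • pw u ((i : ℕ) + (j : ℕ) + 1))]
  split_ifs with h
  · rfl
  · rw [pw_zero_of_ge u _ (by omega), smul_zero]

lemma Lmap_single_coeff (u x : Fin n → ℂ) (k : Fin n)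
    (hlow : ∀ j : Fin n, (j : ℕ) < (k : ℕ) → x j = 0) :
    Lmap u x k = x k * (u ⟨0, lt_of_le_of_lt (Nat.zero_le _) k.isLt⟩) ^ ((k : ℕ) + 1) := by
  rw [Lmap_apply, Finset.sum_apply, Finset.sum_eq_single k]
  · rw [Pi.smul_apply, smul_eq_mul,
      show pw u (k : ℕ) k = pw u (k : ℕ) ⟨(k : ℕ), k.isLt⟩ by rfl,
      pw_coeff u (k : ℕ) k.isLt]
  · intro j _ hj
    rw [Pi.smul_apply, smul_eq_mul]
    rcases lt_or_ge (j : ℕ) (k : ℕ) with h | h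
    · rw [hlow j h, zero_mul]
    · have hkj : (k : ℕ) < (j : ℕ) :=
        lt_of_le_of_ne h (fun hc => hj (Fin.ext hc.symm))
      rw [pw_supp u (j : ℕ) k hkj, mul_zero]
  · simp

lemma Lmap_inj (u : Fin n → ℂ) (hn : 0 < n) (hu : u ⟨0, hn⟩ ≠ 0) :
    Function.Injective (Lmap u) := by
  rw [← LinearMap.ker_eq_bot, LinearMap.ker_eq_bot']
  intro x hx
  have H : ∀ m : ℕ, ∀ k : Fin n, (k : ℕ) = m → x k = 0 := by
    intro m
    induction m using Nat.strong_induction_on with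
    | _ m ih =>
      intro k hk
      have h1 : Lmap u x k = x k * (u ⟨0, hn⟩) ^ ((k : ℕ) + 1) := by
        rw [Lmap_single_coeff u x k (fun j hj => ih (j : ℕ) (by omega) j rfl)]
      rw [hx] at h1
      have h2 : (u ⟨0, hn⟩) ^ ((k : ℕ) + 1) ≠ 0 := pow_ne_zero _ hu
      have : (0 : ℂ) = x k * (u ⟨0, hn⟩) ^ ((k : ℕ) + 1) := h1
      field_simp at this
      exact (mul_eq_zero.mp this.symm).resolve_right h2
  funext k
  exact H (k : ℕ) k rfl

lemma Lmap_c1 (u x : Fin n → ℂ) (h1 : 1 < n) :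
    Lmap u x ⟨1, h1⟩ = x ⟨0, by omega⟩ * u ⟨1, h1⟩ + x ⟨1, h1⟩ * (u ⟨0, by omega⟩) ^ 2 := by
  rw [Lmap_apply, Finset.sum_apply]
  rw [← Finset.sum_subset (Finset.subset_univ
      ({⟨0, by omega⟩, ⟨1, h1⟩} : Finset (Fin n)))]
  · rw [Finset.sum_pair (by intro hc; have := Fin.mk.injEq .. ▸ hc; simp at this)]
    rw [Pi.smul_apply, Pi.smul_apply, smul_eq_mul, smul_eq_mul]
    congr 2
    rw [show pw u (1 : ℕ) ⟨1, h1⟩ = pw u 1 ⟨1, h1⟩ from rfl,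
      pw_coeff u 1 h1]
  · intro j _ hj
    simp only [Finset.mem_insert, Finset.mem_singleton] at hj
    push_neg at hj
    have hj0 : (j : ℕ) ≠ 0 := fun hc => hj.1 (Fin.ext hc)
    have hj1 : (j : ℕ) ≠ 1 := fun hc => hj.2 (Fin.ext hc)
    have : 1 < (j : ℕ) := by omega
    rw [Pi.smul_apply, smul_eq_mul, pw_supp u (j : ℕ) ⟨1, h1⟩ this, mul_zero]

noncomputable def pert (n : ℕ) (p : ℕ) (c : ℂ) : Fin n → ℂ :=
  fun k => if (k : ℕ) = p then c else 0

lemma pw_perturb (hn : 0 < n) (u : Fin n → ℂ) (p : ℕ) (hp : 1 ≤ p) (c : ℂ) (m : ℕ) :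
    (∀ k : Fin n, (k : ℕ) < p + m → pw (u + pert n p c) m k = pw u m k) ∧
    (∀ k : Fin n, (k : ℕ) = p + m →
      pw (u + pert n p c) m k - pw u m k = ((m : ℂ) + 1) * (u ⟨0, hn⟩) ^ m * c) := by
  induction m with
  | zero =>
    constructor
    · intro k hk
      show u k + pert n p c k = u k
      rw [pert, if_neg (by omega), add_zero]
    · intro k hk
      show u k + pert n p c k - u k = _
      rw [pert, if_pos (by omega)]
      push_cast
      ring
  | succ m ih =>
    set u' := u + pert n p c with hu'
    have hQlow : ∀ k : Fin n, (k : ℕ) < p + m → (pw u' m - pw u m) k = 0 := by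
      intro k hk
      show pw u' m k - pw u m k = 0
      rw [ih.1 k hk, sub_self]
    have hsplit : ∀ k : Fin n, pw u' (m+1) k - pw u (m+1) k
        = nfMul n u (pw u' m - pw u m) k + nfMul n (pert n p c) (pw u' m) k := by
      intro k
      have h1 : pw u' (m+1) = nfMul n u (pw u m)
          + (nfMul n u (pw u' m - pw u m) + nfMul n (pert n p c) (pw u' m)) := by
        show nfMul n u' (pw u' m) = _
        rw [hu', nfMul_add_left]
        rw [show pw u' m = pw u m + (pw u' m - pw u m) by abel]
        rw [nfMul_add_right]
        rw [show pw u m + (pw u' m - pw u m) = pw u' m by abel]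
        abel
      rw [h1]
      show nfMul n u (pw u m) k + _ - pw u (m+1) k = _
      rw [show pw u (m+1) = nfMul n u (pw u m) from rfl]
      simp only [Pi.add_apply]
      ring
    have hDlow : ∀ i : Fin n, (i : ℕ) < p → pert n p c i = 0 := by
      intro i hi; rw [pert, if_neg (by omega)]
    constructor
    · intro k hk
      have h2 : nfMul n u (pw u' m - pw u m) k = 0 :=
        nfMul_supp u _ 0 (p + m) (fun i hi => absurd hi (by omega)) hQlow k (by omega)
      have h3 : nfMul n (pert n p c) (pw u' m) k = 0 :=
        nfMul_supp _ _ p m hDlow (pw_supp u' m) k (by omega)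
      have h4 := hsplit k
      rw [h2, h3, add_zero] at h4
      exact sub_eq_zero.mp h4
    · intro k hk
      have hpn : p < n := by have := k.isLt; omega
      have hmn : m < n := by have := k.isLt; omega
      have hpmn : p + m < n := by have := k.isLt; omega
      have h2 : nfMul n u (pw u' m - pw u m) k
          = u ⟨0, hn⟩ * (pw u' m - pw u m) ⟨p + m, hpmn⟩ :=
        nfMul_coeff u _ 0 (p + m) hn hpmn (fun i hi => absurd hi (by omega)) hQlow k (by omega)
      have h3 : nfMul n (pert n p c) (pw u' m) k
          = pert n p c ⟨p, hpn⟩ * pw u' m ⟨m, hmn⟩ :=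
        nfMul_coeff _ _ p m hpn hmn hDlow (pw_supp u' m) k (by omega)
      have h4 : (pw u' m - pw u m) ⟨p + m, hpmn⟩ = ((m : ℂ) + 1) * (u ⟨0, hn⟩) ^ m * c := by
        show pw u' m _ - pw u m _ = _
        exact ih.2 ⟨p + m, hpmn⟩ rfl
      have h5 : pert n p c ⟨p, hpn⟩ = c := by rw [pert]; exact if_pos rfl
      have h6 : pw u' m ⟨m, hmn⟩ = (u' ⟨0, by omega⟩) ^ (m + 1) := pw_coeff u' m hmn
      have h7 : u' ⟨0, by omega⟩ = u ⟨0, hn⟩ := by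
        show u ⟨0, hn⟩ + pert n p c ⟨0, hn⟩ = u ⟨0, hn⟩
        rw [pert, if_neg (by simp; omega), add_zero]
      rw [hsplit k, h2, h3, h4, h5, h6, h7]
      push_cast
      ring

lemma Lmap_perturb (hn : 0 < n) (v u : Fin n → ℂ) (q : ℕ) (hqn : q < n)
    (hq : ∀ k : Fin n, (k : ℕ) < q → v k = 0) (p : ℕ) (hp : 1 ≤ p) (c : ℂ) :
    (∀ k : Fin n, (k : ℕ) < p + q → Lmap (u + pert n p c) v k = Lmap u v k) ∧
    (∀ k : Fin n, (k : ℕ) = p + q → Lmap (u + pert n p c) v k - Lmap u v k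
        = v ⟨q, hqn⟩ * (((q : ℂ) + 1) * (u ⟨0, hn⟩) ^ q * c)) := by
  set u' := u + pert n p c with hu'
  have hdiff : ∀ k : Fin n, Lmap u' v k - Lmap u v k
      = ∑ j : Fin n, v j * (pw u' (j : ℕ) k - pw u (j : ℕ) k) := by
    intro k
    rw [Lmap_apply, Lmap_apply, Finset.sum_apply, Finset.sum_apply,
      ← Finset.sum_sub_distrib]
    refine Finset.sum_congr rfl fun j _ => ?_
    rw [Pi.smul_apply, Pi.smul_apply, smul_eq_mul, smul_eq_mul, mul_sub]
  constructor
  · intro k hk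
    have h0 : Lmap u' v k - Lmap u v k = 0 := by
      rw [hdiff k]
      apply Finset.sum_eq_zero
      intro j _
      rcases lt_or_ge (j : ℕ) q with h | h
      · rw [hq j h, zero_mul]
      · rw [(pw_perturb hn u p hp c (j : ℕ)).1 k (by omega), sub_self, mul_zero]
    exact sub_eq_zero.mp h0
  · intro k hk
    rw [hdiff k, Finset.sum_eq_single (⟨q, hqn⟩ : Fin n)]
    · rw [(pw_perturb hn u p hp c q).2 k (by omega)]
    · intro j _ hj
      rcases lt_or_ge (j : ℕ) q with h | h
      · rw [hq j h, zero_mul]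
      · have : q < (j : ℕ) := lt_of_le_of_ne h (fun hc => hj (Fin.ext hc.symm))
        rw [(pw_perturb hn u p hp c (j : ℕ)).1 k (by omega), sub_self, mul_zero]
    · simp

lemma exists_good_u (hn5 : 5 ≤ n) (s : ℕ) (hs1 : 4 ≤ s) (hs2 : s ≤ n) (v : Fin n → ℂ)
    (hvlow : ∀ k : Fin n, (k : ℕ) < s - 1 → v k = 0)
    (a1 : ℂ) (ha1 : a1 ≠ 0)
    (hvs : v ⟨s - 1, by omega⟩ ≠ 0)
    (hkey : v ⟨s - 1, by omega⟩ * a1 ^ s = a1 ^ 3) :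
    ∃ u : Fin n → ℂ, u ⟨0, by omega⟩ = a1 ∧
      Lmap u v = fun k : Fin n => if (k : ℕ) + 1 = s then a1 ^ 3 else 0 := by
  have hn : 0 < n := by omega
  set T : Fin n → ℂ := fun k => if (k : ℕ) + 1 = s then a1 ^ 3 else 0 with hT
  have hTval : ∀ k : Fin n, T k = if (k : ℕ) + 1 = s then a1 ^ 3 else 0 := fun k => rfl
  have base : ∀ u : Fin n → ℂ, u ⟨0, hn⟩ = a1 →
      ∀ k : Fin n, (k : ℕ) < s → Lmap u v k = T k := by
    intro u hu0 k hk
    rcases lt_or_ge (k : ℕ) (s - 1) with h | h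
    · have hL : Lmap u v k = 0 := by
        rw [Lmap_apply, Finset.sum_apply]
        apply Finset.sum_eq_zero
        intro j _
        rw [Pi.smul_apply, smul_eq_mul]
        rcases lt_or_ge (j : ℕ) (s - 1) with h2 | h2
        · rw [hvlow j h2, zero_mul]
        · rw [pw_supp u (j : ℕ) k (by omega), mul_zero]
      rw [hL, hTval k, if_neg (by omega)]
    · have hk1 : (k : ℕ) = s - 1 := by omega
      have hL : Lmap u v k = v k * (u ⟨0, hn⟩) ^ ((k : ℕ) + 1) :=
        Lmap_single_coeff u v k (fun j hj => hvlow j (by omega))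
      have hkeq : k = ⟨s - 1, by omega⟩ := Fin.ext hk1
      rw [hL, hu0, hkeq, hTval]
      rw [if_pos (by simp; omega)]
      rw [show ((⟨s - 1, by omega⟩ : Fin n) : ℕ) + 1 = s by simp; omega]
      exact hkey
  have claim : ∀ j : ℕ, ∃ u : Fin n → ℂ, u ⟨0, hn⟩ = a1 ∧
      ∀ k : Fin n, (k : ℕ) < s + j → Lmap u v k = T k := by
    intro j
    induction j with
    | zero =>
      refine ⟨fun k => if (k : ℕ) = 0 then a1 else 0, by simp, ?_⟩
      intro k hk
      exact base _ (by simp) k (by omega)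
    | succ j ih =>
      obtain ⟨u, hu0, hu⟩ := ih
      by_cases hcase : s + j < n
      · set q := s - 1 with hq
        set p := j + 1 with hp
        have hqn : q < n := by omega
        have hpq : p + q = s + j := by omega
        set slope : ℂ := v ⟨q, hqn⟩ * (((q : ℂ) + 1) * a1 ^ q) with hslope
        have hslope0 : slope ≠ 0 := by
          apply mul_ne_zero hvs
          apply mul_ne_zero
          · norm_cast
          · exact pow_ne_zero _ ha1
        set kk : Fin n := ⟨s + j, hcase⟩ with hkk
        set c : ℂ := (T kk - Lmap u v kk) / slope with hc
        refine ⟨u + pert n p c, ?_, ?_⟩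
        · show u ⟨0, hn⟩ + pert n p c ⟨0, hn⟩ = a1
          rw [pert, if_neg (by simp), add_zero, hu0]
        · intro k hk
          rcases lt_or_ge (k : ℕ) (s + j) with h | h
          · rw [(Lmap_perturb hn v u q hqn (fun k' hk' => hvlow k' (by omega))
              p (by omega) c).1 k (by omega)]
            exact hu k h
          · have hks : (k : ℕ) = s + j := by omega
            have hkeq : k = kk := Fin.ext (by simp [hkk, hks])
            have h2 := (Lmap_perturb hn v u q hqn (fun k' hk' => hvlow k' (by omega))
              p (by omega) c).2 k (by omega)
            rw [hu0] at h2
            have h3 : v ⟨q, hqn⟩ * (((q : ℂ) + 1) * a1 ^ q * c) = slope * c := by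
              rw [hslope]; ring
            rw [h3, hc] at h2
            rw [hkeq] at h2 ⊢
            have h4 : slope * ((T kk - Lmap u v kk) / slope) = T kk - Lmap u v kk :=
              mul_div_cancel₀ _ hslope0
            rw [h4] at h2
            linear_combination h2
      · exact ⟨u, hu0, fun k hk => hu k (by omega)⟩
  obtain ⟨u, hu0, hu⟩ := claim n
  exact ⟨u, hu0, funext fun k => hu k (by omega)⟩

lemma sumE_apply (γ : ℕ → ℂ) (k : Fin n) :
    (∑ t ∈ Finset.Icc 1 n, γ t • nfE n t) k = γ ((k : ℕ) + 1) := by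
  rw [Finset.sum_apply, Finset.sum_eq_single ((k : ℕ) + 1)]
  · rw [Pi.smul_apply, smul_eq_mul, nfE, if_pos rfl, mul_one]
  · intro t _ ht
    rw [Pi.smul_apply, smul_eq_mul, nfE, if_neg (fun hc => ht hc.symm), mul_zero]
  · intro hmem
    exact absurd (Finset.mem_Icc.mpr ⟨by omega, by have := k.isLt; omega⟩) hmem

lemma exists_a1 (w : ℂ) (hw : w ≠ 0) (s : ℕ) (hs : 4 ≤ s) :
    ∃ a1 : ℂ, a1 ≠ 0 ∧ w * a1 ^ s = a1 ^ 3 := by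
  obtain ⟨z, hz⟩ := IsAlgClosed.exists_pow_nat_eq w⁻¹ (n := s - 3) (by omega)
  have hz0 : z ≠ 0 := by
    intro hc
    rw [hc, zero_pow (by omega)] at hz
    exact inv_ne_zero hw hz.symm
  refine ⟨z, hz0, ?_⟩
  have : z ^ s = z ^ 3 * z ^ (s - 3) := by
    rw [← pow_add]
    congr 1
    omega
  rw [this, hz]
  field_simp

lemma nfCoeff_one (x : Fin n → ℂ) (h : 0 < n) : nfCoeff n x 1 = x ⟨0, h⟩ := by
  rw [nfCoeff, Finset.sum_eq_single (⟨0, h⟩ : Fin n)]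
  · rw [if_pos rfl]
  · intro k _ hk
    rw [if_neg]
    intro hc
    exact hk (Fin.ext (by simp; omega))
  · simp

lemma nfCoeff_two (x : Fin n → ℂ) (h : 1 < n) : nfCoeff n x 2 = x ⟨1, h⟩ := by
  rw [nfCoeff, Finset.sum_eq_single (⟨1, h⟩ : Fin n)]
  · rw [if_pos rfl]
  · intro k _ hk
    rw [if_neg]
    intro hc
    exact hk (Fin.ext (by simp; omega))
  · simp

end S10

/-- for `n ≥ 5`, `4 ≤ s ≤ n`, `α₁ = … = α_{s-1} = 0` and
`αₛ ≠ 0`, `TP₀(0,…,0,αₛ,…,αₙ)` is isomorphic to `TP₀(0,…,0,1ₛ,0,…,0)`. -/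
theorem stmt_10 (n : ℕ) (hn : 5 ≤ n) (s : ℕ) (hs1 : 4 ≤ s) (hs2 : s ≤ n)
    (α : ℕ → ℂ) (h0 : ∀ t, 1 ≤ t → t < s → α t = 0) (hs : α s ≠ 0) :
    TPIso n (brTP0 n α) (brTP0 n fun t => if t = s then 1 else 0) := by
  have hn0 : 0 < n := by omega
  have h1n : 1 < n := by omega
  have hVapp : ∀ k : Fin n, (∑ t ∈ Finset.Icc 1 n, α t • nfE n t) k = α ((k : ℕ) + 1) :=
    fun k => S10.sumE_apply α k
  have hvlow : ∀ k : Fin n, (k : ℕ) < s - 1 → (∑ t ∈ Finset.Icc 1 n, α t • nfE n t) k = 0 := by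
    intro k hk
    rw [hVapp]
    exact h0 _ (by omega) (by omega)
  have hVs : (∑ t ∈ Finset.Icc 1 n, α t • nfE n t) ⟨s - 1, by omega⟩ = α s := by
    rw [hVapp]
    congr 1
    simp
    omega
  obtain ⟨a1, ha1, hkey⟩ := S10.exists_a1 (α s) hs s hs1
  obtain ⟨u, hu0, huV⟩ := S10.exists_good_u hn s hs1 hs2 _ hvlow a1 ha1
    (by rw [hVs]; exact hs) (by rw [hVs]; exact hkey)
  have hinj : Function.Injective (S10.Lmap u) := S10.Lmap_inj u hn0 (by rw [hu0]; exact ha1)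
  have hsurj : Function.Surjective (S10.Lmap u) := LinearMap.injective_iff_surjective.mp hinj
  refine ⟨LinearEquiv.ofBijective (S10.Lmap u) (show Function.Bijective (S10.Lmap u) from ⟨hinj, hsurj⟩), ?_, ?_⟩
  · intro x y
    simp only [LinearEquiv.ofBijective_apply]
    exact S10.Lmap_mul u x y
  · intro x y
    simp only [LinearEquiv.ofBijective_apply]
    rw [brTP0, brTP0, map_smul]
    have hLV : S10.Lmap u (∑ t ∈ Finset.Icc 1 n, α t • nfE n t) = a1 ^ 3 • nfE n s := by
      rw [huV]
      funext k
      rw [Pi.smul_apply, smul_eq_mul, nfE]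
      show (if (k : ℕ) + 1 = s then a1 ^ 3 else 0) = _
      split <;> ring
    rw [hLV, smul_smul]
    have hsumβ : (∑ t ∈ Finset.Icc 1 n, (if t = s then (1 : ℂ) else 0) • nfE n t) = nfE n s := by
      funext k
      rw [S10.sumE_apply (fun t => if t = s then (1 : ℂ) else 0) k]
      show (if (k : ℕ) + 1 = s then (1 : ℂ) else 0) = _
      rw [nfE]
    rw [hsumβ]
    congr 1
    have hφ0 : ∀ w : Fin n → ℂ, S10.Lmap u w ⟨0, hn0⟩ = w ⟨0, hn0⟩ * a1 := by
      intro w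
      have h2 : S10.Lmap u w ⟨0, hn0⟩ = w ⟨0, hn0⟩ * (u ⟨0, hn0⟩) ^ (0 + 1) :=
        S10.Lmap_single_coeff u w ⟨0, hn0⟩ (fun j hj => absurd hj (by simp))
      rw [h2, hu0, pow_one]
    have hφ1 : ∀ w : Fin n → ℂ, S10.Lmap u w ⟨1, h1n⟩
        = w ⟨0, hn0⟩ * u ⟨1, h1n⟩ + w ⟨1, h1n⟩ * a1 ^ 2 := by
      intro w
      have h2 : S10.Lmap u w ⟨1, h1n⟩
          = w ⟨0, by omega⟩ * u ⟨1, h1n⟩ + w ⟨1, h1n⟩ * (u ⟨0, by omega⟩) ^ 2 :=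
        S10.Lmap_c1 u w h1n
      rw [h2, hu0]
    rw [S10.nfCoeff_one x hn0, S10.nfCoeff_one y hn0,
      S10.nfCoeff_two x h1n, S10.nfCoeff_two y h1n,
      S10.nfCoeff_one _ hn0, S10.nfCoeff_one _ hn0,
      S10.nfCoeff_two _ h1n, S10.nfCoeff_two _ h1n,
      hφ0, hφ0, hφ1, hφ1]
    ring
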